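/- arXiv:1805.06440 — 2 statements merged into one kernel-verified Lean document; each statement's English description precedes it below -/
import Mathlib

section
/- Let L(w) = ½‖w - w*‖² on ℝⁿ (quadratic loss with minimizer w*), w ∈ ℝⁿ with all wᵢ ≠ 0, η > 0, and update w'(λ)ᵢ = wᵢ - η((wᵢ - w*ᵢ) + exp(λᵢ)sign(wᵢ)). Then the counterfactual gradient is ∂L_CF/∂λᵢ = -η·exp(λᵢ)·sign(wᵢ)·((1-η)(wᵢ - w*ᵢ) - η·exp(λᵢ)sign(wᵢ)). -/
/-- Counterfactual gradient for the quadratic loss `L(w) = ½Σᵢ(wᵢ - w*ᵢ)²`. -/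
theorem counterfactual_gradient_quadratic
    (n : ℕ) (wstar w : Fin n → ℝ) (hw : ∀ i, w i ≠ 0) (η : ℝ) (hη : 0 < η)
    (L : (Fin n → ℝ) → ℝ)
    (hLdef : ∀ v, L v = (1 / 2) * ∑ i, (v i - wstar i) ^ 2)
    (w' : (Fin n → ℝ) → (Fin n → ℝ))
    (hw' : ∀ lam i, w' lam i =
      w i - η * ((w i - wstar i) + Real.exp (lam i) * Real.sign (w i)))
    (lam : Fin n → ℝ) (i : Fin n) :
    deriv (fun t : ℝ => L (w' (Function.update lam i t))) (lam i) =
      -η * Real.exp (lam i) * Real.sign (w i) *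
        ((1 - η) * (w i - wstar i) - η * Real.exp (lam i) * Real.sign (w i)) := by
  have A : ℝ := 0
  set s : ℝ := Real.sign (w i) with hs
  have hA : (1 - η) * (w i - wstar i) = (1 - η) * (w i - wstar i) := rfl
  set C : ℝ := ∑ j ∈ Finset.univ.erase i,
      ((w j - η * ((w j - wstar j) + Real.exp (lam j) * Real.sign (w j))) - wstar j) ^ 2 with hC
  have hfun : (fun t : ℝ => L (w' (Function.update lam i t))) =
      fun t : ℝ => (1 / 2) * (((1 - η) * (w i - wstar i) - η * s * Real.exp t) ^ 2 + C) := by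
    funext t
    rw [hLdef, ← Finset.add_sum_erase _ _ (Finset.mem_univ i)]
    have h1 : w' (Function.update lam i t) i - wstar i =
        (1 - η) * (w i - wstar i) - η * s * Real.exp t := by
      rw [hw', Function.update_self]; ring
    rw [h1, hC]
    congr 1
    congr 1
    apply Finset.sum_congr rfl
    intro j hj
    rw [hw', Function.update_of_ne (Finset.ne_of_mem_erase hj)]
  rw [hfun]
  have hd : HasDerivAt
      (fun t : ℝ => (1 / 2) * (((1 - η) * (w i - wstar i) - η * s * Real.exp t) ^ 2 + C))
      ((1 / 2) * (2 * ((1 - η) * (w i - wstar i) - η * s * Real.exp (lam i)) ^ 1 *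
        (0 - η * s * Real.exp (lam i)))) (lam i) := by
    have h1 : HasDerivAt (fun t : ℝ => (1 - η) * (w i - wstar i) - η * s * Real.exp t)
        (0 - η * s * Real.exp (lam i)) (lam i) := by
      have := ((Real.hasDerivAt_exp (lam i)).const_mul (η * s)).const_sub
        ((1 - η) * (w i - wstar i))
      simpa [mul_assoc, mul_comm, mul_left_comm, sub_eq_add_neg] using this
    exact ((h1.pow 2).add_const C).const_mul (1 / 2)
  rw [hd.deriv]
  ring
end

section
/- With L2 regularization ‖wᵢ‖ = ½wᵢ² instead of L1: for differentiable L : ℝⁿ → ℝ, η > 0, and update w'(λ)ᵢ = wᵢ - η(∇L(w)ᵢ + exp(λᵢ)·wᵢ), the counterfactual loss L_CF(λ) = L(w'(λ)) satisfies ∂L_CF/∂λᵢ = -η·exp(λᵢ)·wᵢ·(∂L/∂wᵢ)(w'(λ)). -/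
/-- Variant of the counterfactual-gradient theorem for L2 (ridge) regularization:
with `w'(λ)ᵢ = wᵢ - η(∇L(w)ᵢ + exp(λᵢ)·wᵢ)`, one has
`∂L_CF/∂λᵢ = -η·exp(λᵢ)·wᵢ·(∂L/∂wᵢ)(w'(λ))`. -/
theorem counterfactual_gradient_L2
    (n : ℕ) (L : (Fin n → ℝ) → ℝ) (hL : Differentiable ℝ L)
    (w : Fin n → ℝ) (η : ℝ) (hη : 0 < η)
    (w' : (Fin n → ℝ) → (Fin n → ℝ))
    (hw' : ∀ lam i, w' lam i =
      w i - η * (fderiv ℝ L w (Pi.single i 1) + Real.exp (lam i) * w i))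
    (lam : Fin n → ℝ) (i : Fin n) :
    deriv (fun t : ℝ => L (w' (Function.update lam i t))) (lam i) =
      -η * Real.exp (lam i) * w i * fderiv ℝ L (w' lam) (Pi.single i 1) := by
  set e : Fin n → ℝ := Pi.single i 1 with he
  set c : ℝ := -η * w i with hc
  have key : ∀ t : ℝ, w' (Function.update lam i t) =
      w' lam + ((c * (Real.exp t - Real.exp (lam i))) • e) := by
    intro t
    funext j
    by_cases hj : j = i
    · subst hj
      simp only [Pi.add_apply, Pi.smul_apply, he, Pi.single_eq_same, hw', hc,
        Function.update_self, smul_eq_mul, mul_one]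
      ring
    · simp only [Pi.add_apply, Pi.smul_apply, he, Pi.single_eq_of_ne hj, hw',
        Function.update_of_ne hj, smul_zero, add_zero]
  have hg : HasDerivAt (fun t : ℝ => w' lam + ((c * (Real.exp t - Real.exp (lam i))) • e))
      ((c * Real.exp (lam i)) • e) (lam i) := by
    have h1 : HasDerivAt (fun t : ℝ => c * (Real.exp t - Real.exp (lam i)))
        (c * Real.exp (lam i)) (lam i) := by
      simpa using (((Real.hasDerivAt_exp (lam i)).sub_const (Real.exp (lam i))).const_mul c)
    simpa using (h1.smul_const e).const_add (w' lam)
  have hpt : w' lam + ((c * (Real.exp (lam i) - Real.exp (lam i))) • e) = w' lam := by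
    simp
  have hcomp : HasDerivAt (fun t : ℝ => L (w' lam + ((c * (Real.exp t - Real.exp (lam i))) • e)))
      (fderiv ℝ L (w' lam) ((c * Real.exp (lam i)) • e)) (lam i) := by
    have h2 := ((hL _).hasFDerivAt).comp_hasDerivAt (lam i) hg
    simp only [sub_self, mul_zero, zero_smul, add_zero, Function.comp] at h2
    exact h2
  have : deriv (fun t : ℝ => L (w' (Function.update lam i t))) (lam i)
      = fderiv ℝ L (w' lam) ((c * Real.exp (lam i)) • e) := by
    have := hcomp.deriv
    rw [← this]
    congr 1
    funext t
    rw [key t]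
  rw [this, map_smul]
  simp only [smul_eq_mul, hc]
  ring
end
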